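/- Let R be an F-finite F-pure ring of prime characteristic and let P be a minimal prime of R. Then C(P) = P, where C is the Cartier core. -/

import Mathlib

/-- φ : R →+ R is an `R`-linear map `F_*^e R → R`, i.e. φ(r^{p^e} s) = r φ(s). -/
def IsCartierMap {R : Type*} [CommRing R] (p e : ℕ) (φ : R →+ R) : Prop :=
  ∀ r s : R, φ (r ^ p ^ e * s) = r * φ s

/-- `R` is F-finite: the Frobenius `x ↦ x^p` is a finite ring map. -/
def FFinite (R : Type*) [CommRing R] (p : ℕ) : Prop :=
  ∃ f : R →+* R, (∀ x, f x = x ^ p) ∧ f.Finite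

/-- The Cartier core of an ideal `J`. -/
def cartierCore {R : Type*} [CommRing R] (p : ℕ) (J : Ideal R) : Ideal R where
  carrier := {r : R | ∀ e, 0 < e → ∀ φ : R →+ R, IsCartierMap p e φ → φ r ∈ J}
  add_mem' := by
    intro a b ha hb e he φ hφ
    rw [map_add]
    exact J.add_mem (ha e he φ hφ) (hb e he φ hφ)
  zero_mem' := by
    intro e he φ hφ
    rw [map_zero]
    exact J.zero_mem
  smul_mem' := by
    intro a x hx e he φ hφ
    have hψ : IsCartierMap p e (φ.comp (AddMonoidHom.mulLeft a)) := by
      intro r s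
      simp only [AddMonoidHom.coe_comp, Function.comp_apply, AddMonoidHom.coe_mulLeft]
      rw [mul_left_comm, hφ]
    simpa using hx e he _ hψ

/-- `R` is F-pure (Frobenius split): some iterate of Frobenius splits. -/
def IsFPure (R : Type*) [CommRing R] (p : ℕ) : Prop :=
  ∃ e, 0 < e ∧ ∃ φ : R →+ R, IsCartierMap p e φ ∧ φ 1 = 1

/-- The Frobenius bracket power `J^{[q]}` of an ideal. -/
def frobPow {S : Type*} [CommRing S] (q : ℕ) (J : Ideal S) : Ideal S :=
  Ideal.span ((fun f => f ^ q) '' (J : Set S))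

/-- `J` is uniformly F-compatible. -/
def UniformlyFCompatible {R : Type*} [CommRing R] (p : ℕ) (J : Ideal R) : Prop :=
  ∀ e, 0 < e → ∀ φ : R →+ R, IsCartierMap p e φ → ∀ x ∈ J, φ x ∈ J

/-- A regular (Noetherian) ring: every localization at a prime is a regular local ring. -/
def IsRegularRing' (S : Type*) [CommRing S] : Prop :=
  IsNoetherianRing S ∧ ∀ (P : Ideal S) [P.IsPrime],
    ∃ s : Finset (Localization.AtPrime P),
      Ideal.span (s : Set (Localization.AtPrime P)) =
        IsLocalRing.maximalIdeal (Localization.AtPrime P) ∧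
      (s.card : WithBot (WithTop ℕ)) = ringKrullDim (Localization.AtPrime P)


lemma mem_cartierCore_iff {R : Type*} [CommRing R] {p : ℕ} {J : Ideal R} {r : R} :
    r ∈ cartierCore p J ↔ ∀ e, 0 < e → ∀ φ : R →+ R, IsCartierMap p e φ → φ r ∈ J := Iff.rfl

/-- in an F-pure ring, minimal primes are fixed by the Cartier core. -/
theorem cartierCore_minimalPrime {R : Type*} [CommRing R] [IsNoetherianRing R] (p : ℕ)
    [Fact p.Prime] [CharP R p] (hFF : FFinite R p) (hFP : IsFPure R p) (P : Ideal R)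
    (hmin : P ∈ minimalPrimes R) :
    cartierCore p P = P := by
  obtain ⟨e₀, he₀, φ₀, hφ₀, hφ₀1⟩ := hFP
  have hpp : p.Prime := Fact.out
  have hP : P.IsPrime := hmin.1.1
  -- splitting kills p^e₀-th powers of zero
  have hsplit : ∀ x : R, x ^ p ^ e₀ = 0 → x = 0 := by
    intro x hx
    have h := hφ₀ x 1
    rw [hφ₀1, mul_one, mul_one, hx, map_zero] at h
    exact h.symm
  have hiter : ∀ k (x : R), x ^ p ^ (e₀ * k) = 0 → x = 0 := by
    intro k
    induction k with
    | zero => intro x hx; simpa using hx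
    | succ k ih =>
      intro x hx
      apply ih
      apply hsplit
      rw [← pow_mul, ← pow_add, ← Nat.mul_succ]
      exact hx
  -- R is reduced
  have hred : ∀ x : R, IsNilpotent x → x = 0 := by
    rintro x ⟨n, hn⟩
    apply hiter n
    have hle : n ≤ p ^ (e₀ * n) := by
      calc n ≤ 2 ^ n := Nat.le_of_lt (Nat.lt_two_pow_self (n := n))
        _ ≤ p ^ n := Nat.pow_le_pow_left hpp.two_le n
        _ ≤ p ^ (e₀ * n) := Nat.pow_le_pow_right hpp.pos
              (Nat.le_mul_of_pos_left n he₀)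
    have h2 : x ^ p ^ (e₀ * n) = x ^ n * x ^ (p ^ (e₀ * n) - n) := by
      rw [← pow_add, Nat.add_sub_cancel' hle]
    rw [h2, hn, zero_mul]
  apply le_antisymm
  · -- C(P) ≤ P, using F-purity
    intro r hr
    have hmem : r ^ (p ^ e₀ - 1) * r ∈ cartierCore p P := Ideal.mul_mem_left _ _ hr
    have h := mem_cartierCore_iff.mp hmem e₀ he₀ φ₀ hφ₀
    have heq : r ^ (p ^ e₀ - 1) * r = r ^ p ^ e₀ * 1 := by
      rw [mul_one, ← pow_succ, Nat.sub_add_cancel (Nat.one_le_pow _ _ hpp.pos)]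
    rw [heq, hφ₀ r 1, hφ₀1, mul_one] at h
    exact h
  · -- P ≤ C(P)
    intro x hx
    rw [mem_cartierCore_iff]
    intro e he φ hφ
    obtain ⟨s, hs, n, hsn⟩ : ∃ s ∉ P, ∃ n, s * x ^ n = 0 := by
      by_contra hcon
      push_neg at hcon
      set M : Submonoid R := Submonoid.closure ((↑P)ᶜ ∪ {x}) with hM
      have hform : ∀ m ∈ M, ∃ s ∉ P, ∃ n, m = s * x ^ n := by
        intro m hm
        induction hm using Submonoid.closure_induction with
        | mem y hy =>
          rcases hy with hy | hy
          · exact ⟨y, hy, 0, by simp⟩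
          · refine ⟨1, fun h1 => hP.ne_top (Ideal.eq_top_of_isUnit_mem _ h1 isUnit_one), 1, ?_⟩
            rw [Set.mem_singleton_iff] at hy
            rw [hy, one_mul, pow_one]
        | one => exact ⟨1, fun h1 => hP.ne_top (Ideal.eq_top_of_isUnit_mem _ h1 isUnit_one), 0,
            by simp⟩
        | mul a b _ _ iha ihb =>
          obtain ⟨s, hs, n, rfl⟩ := iha
          obtain ⟨t, ht, m, rfl⟩ := ihb
          refine ⟨s * t, fun h => ((hP.mem_or_mem h).elim hs ht), n + m, ?_⟩
          rw [pow_add]; ring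
      have h0 : (0 : R) ∉ M := by
        intro h0
        obtain ⟨s, hs, n, hsn⟩ := hform 0 h0
        exact hcon s hs n hsn.symm
      obtain ⟨Q, hQp, -, hQdis⟩ := Ideal.exists_le_prime_disjoint (⊥ : Ideal R) M
        (Set.disjoint_left.mpr (by rintro a ha; rw [SetLike.mem_coe, Ideal.mem_bot] at ha
                                   subst ha; exact h0))
      have hQP : Q ≤ P := by
        intro q hq
        by_contra hqP
        exact Set.disjoint_left.mp hQdis hq (Submonoid.subset_closure (Or.inl hqP))
      have hxM : x ∈ M := Submonoid.subset_closure (Or.inr rfl)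
      have hxQ : x ∉ Q := fun h => Set.disjoint_left.mp hQdis h hxM
      exact hxQ (hmin.2 ⟨hQp, bot_le⟩ hQP hx)
    have hn0 : n ≠ 0 := by
      rintro rfl
      rw [pow_zero, mul_one] at hsn
      exact hs (hsn ▸ P.zero_mem)
    have hsx : s * x = 0 := by
      apply hred
      refine ⟨n, ?_⟩
      rw [mul_pow]
      calc s ^ n * x ^ n = s ^ (n - 1) * (s * x ^ n) := by
            rw [← mul_assoc, ← pow_succ, Nat.sub_add_cancel (Nat.one_le_iff_ne_zero.mpr hn0)]
        _ = 0 := by rw [hsn, mul_zero]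
    have h1 : s ^ p ^ e * x = 0 := by
      calc s ^ p ^ e * x = s ^ (p ^ e - 1) * (s * x) := by
            rw [← mul_assoc, ← pow_succ, Nat.sub_add_cancel (Nat.one_le_pow _ _ hpp.pos)]
        _ = 0 := by rw [hsx, mul_zero]
    have h2 : s * φ x = 0 := by rw [← hφ s x, h1, map_zero]
    have hmem : s * φ x ∈ P := h2 ▸ P.zero_mem
    exact (hP.mem_or_mem hmem).resolve_left hs
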